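/- arXiv:2406.05254 — 4 statements merged into one kernel-verified Lean document; each statement's English description precedes it below -/
import Mathlib

section
/- Let P = {μ̂_1, ..., μ̂_N} be N points in ℝ^d, let μ ∈ ℝ^d and r > 0, and suppose at least (7/10)·N of the points satisfy ‖μ̂_i - μ‖ ≤ r. If q ∈ ℝ^d satisfies ‖q - μ‖ > 10r, then ‖∑_{i=1}^N (q - μ̂_i)/‖q - μ̂_i‖‖ ≥ (3/10)·N. -/
/-!
Project the gradient onto the unit vector `u` pointing from `μ` to `q`. Every summand is a unit
vector, so it contributes at least `-1`. A good point lies within `r < ‖q - μ‖ / 10` of `μ`, so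
its direction to `q` is within `1/5` of `u` and contributes at least `1 - (1/5)² / 2 = 49/50`.
With at least `7N/10` good points the projection is at least `(99/50)(7N/10) - N ≥ 3N/10`.
-/

open Finset NormedSpace RealInnerProductSpace

section Normed

variable {E : Type*} [NormedAddCommGroup E] [NormedSpace ℝ E]

theorem NormedSpace.norm_normalize_le_one (w : E) : ‖normalize w‖ ≤ 1 := by
  by_cases hw : w = 0
  · simp [hw]
  · exact (norm_normalize hw).le

theorem NormedSpace.norm_normalize_sub_normalize_le {v : E} (hv : v ≠ 0) (w : E) :
    ‖normalize v - normalize w‖ ≤ 2 * ‖v - w‖ / ‖v‖ := by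
  have hv' : ‖v‖ ≠ 0 := norm_ne_zero_iff.2 hv
  have hsplit : normalize v - normalize w
      = ‖v‖⁻¹ • (v - w) + ‖v‖⁻¹ • ((‖w‖ - ‖v‖) • normalize w) := by
    rw [← smul_add, sub_smul, norm_smul_normalize, sub_add_sub_cancel, smul_sub,
      smul_smul, inv_mul_cancel₀ hv', one_smul]
    rfl
  have hnorm : ‖(‖w‖ - ‖v‖) • normalize w‖ ≤ ‖v - w‖ :=
    calc ‖(‖w‖ - ‖v‖) • normalize w‖ = |‖w‖ - ‖v‖| * ‖normalize w‖ := by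
          rw [norm_smul, Real.norm_eq_abs]
      _ ≤ |‖w‖ - ‖v‖| * 1 := by gcongr; exact norm_normalize_le_one w
      _ ≤ ‖v - w‖ := by rw [mul_one, norm_sub_rev]; exact abs_norm_sub_norm_le w v
  calc ‖normalize v - normalize w‖
      ≤ ‖v‖⁻¹ * ‖v - w‖ + ‖v‖⁻¹ * ‖(‖w‖ - ‖v‖) • normalize w‖ := by
        rw [hsplit, ← norm_smul_of_nonneg (inv_nonneg.2 (norm_nonneg v)),
          ← norm_smul_of_nonneg (inv_nonneg.2 (norm_nonneg v))]
        exact norm_add_le _ _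
    _ ≤ ‖v‖⁻¹ * ‖v - w‖ + ‖v‖⁻¹ * ‖v - w‖ := by gcongr
    _ = 2 * ‖v - w‖ / ‖v‖ := by ring

end Normed

theorem Finset.mul_card_add_mul_card_compl_le_sum {ι : Type*} [Fintype ι] [DecidableEq ι]
    (s : Finset ι) {x : ι → ℝ} {a b : ℝ} (hs : ∀ i ∈ s, a ≤ x i) (hsc : ∀ i ∉ s, b ≤ x i) :
    a * #s + b * #sᶜ ≤ ∑ i, x i := by
  rw [← sum_add_sum_compl s x, mul_comm a, mul_comm b]
  refine add_le_add ?_ ?_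
  · simpa using card_nsmul_le_sum s x a hs
  · simpa using card_nsmul_le_sum sᶜ x b fun i hi => hsc i (mem_compl.1 hi)

section Inner

variable {E : Type*} [NormedAddCommGroup E] [InnerProductSpace ℝ E]

theorem inner_eq_one_sub_norm_sub_sq_div_two {x y : E} (hx : ‖x‖ = 1) (hy : ‖y‖ = 1) :
    ⟪x, y⟫ = 1 - ‖x - y‖ ^ 2 / 2 := by
  rw [norm_sub_sq_real, hx, hy]; ring

theorem one_sub_two_mul_sq_le_inner_normalize {v w : E} (hv : v ≠ 0) (hw : w ≠ 0) {ε : ℝ}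
    (hvw : ‖v - w‖ ≤ ε * ‖v‖) : 1 - 2 * ε ^ 2 ≤ ⟪normalize v, normalize w⟫ := by
  have hv' : 0 < ‖v‖ := norm_pos_iff.2 hv
  have hdist : ‖normalize v - normalize w‖ ≤ 2 * ε :=
    (norm_normalize_sub_normalize_le hv w).trans <| by
      rw [div_le_iff₀ hv']; linarith
  rw [inner_eq_one_sub_norm_sub_sq_div_two (norm_normalize hv) (norm_normalize hw)]
  nlinarith [norm_nonneg (normalize v - normalize w)]

theorem mul_card_sub_card_le_norm_sum {ι : Type*} [Fintype ι] (s : Finset ι) {u : E}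
    (hu : ‖u‖ = 1) {f : ι → E} (hf : ∀ i, ‖f i‖ ≤ 1) {c : ℝ} (hs : ∀ i ∈ s, c ≤ ⟪u, f i⟫) :
    (c + 1) * #s - Fintype.card ι ≤ ‖∑ i, f i‖ := by
  classical
  have hlow : ∀ i, -1 ≤ ⟪u, f i⟫ := fun i =>
    calc (-1 : ℝ) ≤ -(‖u‖ * ‖f i‖) := by rw [hu, one_mul]; linarith [hf i]
      _ ≤ ⟪u, f i⟫ := neg_le_of_abs_le (abs_real_inner_le_norm u (f i))
  have hcompl : (#sᶜ : ℝ) = Fintype.card ι - #s := by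
    rw [card_compl, Nat.cast_sub (card_le_univ s)]
  calc (c + 1) * #s - Fintype.card ι = c * #s + -1 * #sᶜ := by rw [hcompl]; ring
    _ ≤ ∑ i, ⟪u, f i⟫ := mul_card_add_mul_card_compl_le_sum s hs fun i _ => hlow i
    _ = ⟪u, ∑ i, f i⟫ := (inner_sum _ _ _).symm
    _ ≤ ‖u‖ * ‖∑ i, f i‖ := real_inner_le_norm _ _
    _ = ‖∑ i, f i‖ := by rw [hu, one_mul]

end Inner

/-- Lower bound on the norm of the geometric-median gradient at a far point:
if at least `(7/10)·N` of the `μ̂ i` satisfy `‖μ̂ i - μ‖ ≤ r` and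
`‖q - μ‖ > 10r`, then `‖∑ i, (q - μ̂ i)/‖q - μ̂ i‖‖ ≥ (3/10)·N`. -/
theorem gradient_norm_lower_bound (d N : ℕ)
    (μhat : Fin N → EuclideanSpace ℝ (Fin d))
    (μ q : EuclideanSpace ℝ (Fin d)) (r : ℝ) (hr : 0 < r)
    (hgood : (7 / 10 : ℝ) * N ≤
      ((Finset.univ.filter fun i => ‖μhat i - μ‖ ≤ r).card : ℝ))
    (hne : ∀ i, q ≠ μhat i)
    (hfar : 10 * r < ‖q - μ‖) :
    (3 / 10 : ℝ) * N ≤ ‖∑ i, ‖q - μhat i‖⁻¹ • (q - μhat i)‖ := by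
  have hqμ : q - μ ≠ 0 := norm_pos_iff.1 (by linarith)
  have hclose : ∀ i ∈ univ.filter fun i => ‖μhat i - μ‖ ≤ r,
      49 / 50 ≤ ⟪normalize (q - μ), normalize (q - μhat i)⟫ := by
    intro i hi
    have hvw : ‖(q - μ) - (q - μhat i)‖ ≤ 1 / 10 * ‖q - μ‖ := by
      rw [sub_sub_sub_cancel_left]; linarith [(mem_filter.1 hi).2]
    linarith [one_sub_two_mul_sq_le_inner_normalize hqμ (sub_ne_zero.2 (hne i)) hvw]
  have hproj := mul_card_sub_card_le_norm_sum _ (norm_normalize hqμ)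
    (fun i => norm_normalize_le_one (q - μhat i)) hclose
  rw [Fintype.card_fin] at hproj
  change _ ≤ ‖∑ i, normalize (q - μhat i)‖
  linarith [(N.cast_nonneg : (0 : ℝ) ≤ N)]
end

section
/- Let μ̂_1, μ̂_2, m, μ ∈ ℝ^d with ‖μ̂_1 - μ‖ ≤ r and ‖μ̂_2 - μ‖ ≤ r. Let S be the set of coordinates i such that m_i lies between (μ̂_1)_i and (μ̂_2)_i (inclusive). Then ∑_{i ∈ S} (m_i - μ_i)² ≤ 2r². -/
open Finset

lemma sq_sub_le_sq_sub_add_sq_sub {α : Type*} [CommRing α] [LinearOrder α] [IsStrictOrderedRing α]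
    {a b x : α} (hx : x ∈ Set.uIcc a b) (c : α) :
    (x - c) ^ 2 ≤ (a - c) ^ 2 + (b - c) ^ 2 := by
  rcases Set.mem_uIcc.1 hx with ⟨hax, hxb⟩ | ⟨hbx, hxa⟩ <;>
    rcases le_total x c with hxc | hcx <;>
    nlinarith [sq_nonneg (a - c), sq_nonneg (b - c)]

lemma EuclideanSpace.sum_sub_sq_le_norm_sub_sq {ι : Type*} [Fintype ι]
    (x y : EuclideanSpace ℝ ι) (S : Finset ι) :
    ∑ i ∈ S, (x i - y i) ^ 2 ≤ ‖x - y‖ ^ 2 := by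
  rw [EuclideanSpace.norm_sq_eq]
  simp only [PiLp.sub_apply, Real.norm_eq_abs, sq_abs]
  exact sum_le_sum_of_subset_of_nonneg (subset_univ S) fun i _ _ => sq_nonneg _

theorem between_coords_bound_general (d : ℕ)
    (μhat₁ μhat₂ m μ : EuclideanSpace ℝ (Fin d)) (r : ℝ)
    (h1 : ‖μhat₁ - μ‖ ≤ r) (h2 : ‖μhat₂ - μ‖ ≤ r)
    (S : Finset (Fin d))
    (hS : ∀ i ∈ S, (μhat₁ i ≤ m i ∧ m i ≤ μhat₂ i) ∨
                   (μhat₂ i ≤ m i ∧ m i ≤ μhat₁ i)) :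
    ∑ i ∈ S, (m i - μ i) ^ 2 ≤ 2 * r ^ 2 :=
  calc ∑ i ∈ S, (m i - μ i) ^ 2
      ≤ ∑ i ∈ S, ((μhat₁ i - μ i) ^ 2 + (μhat₂ i - μ i) ^ 2) :=
        sum_le_sum fun i hi => sq_sub_le_sq_sub_add_sq_sub (Set.mem_uIcc.2 (hS i hi)) _
    _ = ∑ i ∈ S, (μhat₁ i - μ i) ^ 2 + ∑ i ∈ S, (μhat₂ i - μ i) ^ 2 := sum_add_distrib
    _ ≤ ‖μhat₁ - μ‖ ^ 2 + ‖μhat₂ - μ‖ ^ 2 :=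
        add_le_add (EuclideanSpace.sum_sub_sq_le_norm_sub_sq _ _ S)
          (EuclideanSpace.sum_sub_sq_le_norm_sub_sq _ _ S)
    _ ≤ r ^ 2 + r ^ 2 := by gcongr
    _ = 2 * r ^ 2 := by ring

/-- If `‖μ̂₁ - μ‖ ≤ r`, `‖μ̂₂ - μ‖ ≤ r`, and on every coordinate of `S` the
value `m i` lies between `μ̂₁ i` and `μ̂₂ i`, then `∑_{i∈S} (m i - μ i)² ≤ 2r²`. -/
theorem between_coords_bound (d : ℕ)
    (μhat₁ μhat₂ m μ : EuclideanSpace ℝ (Fin d)) (r : ℝ) (hr : 0 < r)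
    (h1 : ‖μhat₁ - μ‖ ≤ r) (h2 : ‖μhat₂ - μ‖ ≤ r)
    (S : Finset (Fin d))
    (hS : ∀ i ∈ S, (μhat₁ i ≤ m i ∧ m i ≤ μhat₂ i) ∨
                   (μhat₂ i ≤ m i ∧ m i ≤ μhat₁ i)) :
    ∑ i ∈ S, (m i - μ i) ^ 2 ≤ 2 * r ^ 2 :=
  between_coords_bound_general d μhat₁ μhat₂ m μ r h1 h2 S hS
end

section
/- Let P be a finite set of N points in ℝ^d, μ ∈ ℝ^d, γ, R > 0, and suppose at least (7/10)·N points p ∈ P satisfy ‖p - μ‖ ≤ γR. For each p ∈ P, let D(p) be the sum of distances from p to its ⌈(7/10)·N⌉ closest points in P (including itself or not, consistently). Then any p* ∈ P minimizing D(p) satisfies ‖p* - μ‖ ≤ 5γR. -/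
/-- Correctness of `ComputeWinner`: if at least `(7/10)·N` points of `P` are
within `γR` of `μ`, `D p` is the minimum sum of distances from `p` to
`⌈(7/10)·N⌉` points of `P`, and `p*` minimizes `D` over `P`, then
`‖p* - μ‖ ≤ 5γR`. -/
theorem computeWinner_correct (d : ℕ)
    (P : Finset (EuclideanSpace ℝ (Fin d))) (N : ℕ) (hN : P.card = N)
    (μ : EuclideanSpace ℝ (Fin d)) (γ R : ℝ) (hγ : 0 < γ) (hR : 0 < R)
    (hgood : (7 / 10 : ℝ) * N ≤
      ((P.filter fun p => ‖p - μ‖ ≤ γ * R).card : ℝ))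
    (k : ℕ) (hk : k = ⌈(7 / 10 : ℝ) * N⌉₊)
    (D : EuclideanSpace ℝ (Fin d) → ℝ)
    (hD : ∀ p ∈ P,
      (∃ T ⊆ P, T.card = k ∧ D p = ∑ q ∈ T, ‖p - q‖) ∧
      ∀ T ⊆ P, T.card = k → D p ≤ ∑ q ∈ T, ‖p - q‖)
    (pstar : EuclideanSpace ℝ (Fin d)) (hpstar : pstar ∈ P)
    (hmin : ∀ p ∈ P, D pstar ≤ D p) :
    ‖pstar - μ‖ ≤ 5 * γ * R := by
  classical
  set G := P.filter fun p => ‖p - μ‖ ≤ γ * R with hGdef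
  have hNpos : 0 < N := by
    rw [← hN]; exact Finset.card_pos.mpr ⟨pstar, hpstar⟩
  have hkG : k ≤ G.card := by
    rw [hk, Nat.ceil_le]; exact hgood
  have hkN : (7 / 10 : ℝ) * N ≤ (k : ℝ) := by rw [hk]; exact Nat.le_ceil _
  have hk1 : 1 ≤ k := by
    rw [hk]
    have : (0 : ℝ) < (7 / 10 : ℝ) * N := by positivity
    exact Nat.one_le_iff_ne_zero.mpr (by
      intro h
      rw [Nat.ceil_eq_zero] at h
      linarith)
  obtain ⟨g, hg⟩ : G.Nonempty := Finset.card_pos.mp (lt_of_lt_of_le hk1 hkG)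
  have hgP : g ∈ P := (Finset.mem_filter.mp hg).1
  have hgμ : ‖g - μ‖ ≤ γ * R := (Finset.mem_filter.mp hg).2
  obtain ⟨S, hSG, hScard⟩ := Finset.exists_subset_card_eq hkG
  have hDg : D g ≤ 2 * k * (γ * R) := by
    have h := (hD g hgP).2 S (hSG.trans (Finset.filter_subset _ _)) hScard
    refine h.trans ?_
    have hsum : ∑ q ∈ S, ‖g - q‖ ≤ ∑ _q ∈ S, (2 * (γ * R)) := by
      apply Finset.sum_le_sum
      intro q hq
      have hqμ : ‖q - μ‖ ≤ γ * R := (Finset.mem_filter.mp (hSG hq)).2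
      have heq : g - q = (g - μ) - (q - μ) := by abel
      calc ‖g - q‖ = ‖(g - μ) - (q - μ)‖ := by rw [heq]
        _ ≤ ‖g - μ‖ + ‖q - μ‖ := norm_sub_le _ _
        _ ≤ 2 * (γ * R) := by linarith
    rw [Finset.sum_const, hScard, nsmul_eq_mul] at hsum
    linarith
  obtain ⟨⟨T, hTP, hTcard, hDp⟩, -⟩ := hD pstar hpstar
  by_cases hb : ‖pstar - μ‖ ≤ γ * R
  · nlinarith [mul_pos hγ hR]
  push_neg at hb
  have hcard : k + G.card ≤ (T ∩ G).card + N := by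
    have h1 := Finset.card_union_add_card_inter T G
    have h2 : (T ∪ G).card ≤ N := by
      rw [← hN]
      exact Finset.card_le_card
        (Finset.union_subset hTP (Finset.filter_subset _ _))
    omega
  have hlow : ((T ∩ G).card : ℝ) * (‖pstar - μ‖ - γ * R) ≤ D pstar := by
    rw [hDp]
    have h1 : ∑ _q ∈ T ∩ G, (‖pstar - μ‖ - γ * R) ≤
        ∑ q ∈ T ∩ G, ‖pstar - q‖ := by
      apply Finset.sum_le_sum
      intro q hq
      have hqμ : ‖q - μ‖ ≤ γ * R :=
        (Finset.mem_filter.mp (Finset.mem_inter.mp hq).2).2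
      have heq : pstar - μ = (pstar - q) + (q - μ) := by abel
      have : ‖pstar - μ‖ ≤ ‖pstar - q‖ + ‖q - μ‖ := by
        rw [heq]; exact norm_add_le _ _
      linarith
    have h2 : ∑ q ∈ T ∩ G, ‖pstar - q‖ ≤ ∑ q ∈ T, ‖pstar - q‖ :=
      Finset.sum_le_sum_of_subset_of_nonneg Finset.inter_subset_left
        (fun _ _ _ => norm_nonneg _)
    rw [Finset.sum_const, nsmul_eq_mul] at h1
    linarith
  have hchain : ((T ∩ G).card : ℝ) * (‖pstar - μ‖ - γ * R) ≤
      2 * k * (γ * R) := le_trans hlow (le_trans (hmin g hgP) hDg)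
  have hcardR : (k : ℝ) + G.card ≤ ((T ∩ G).card : ℝ) + N := by
    exact_mod_cast hcard
  have hmge : (4 / 7 : ℝ) * k ≤ ((T ∩ G).card : ℝ) := by linarith
  have hk0 : (0 : ℝ) < k := by exact_mod_cast hk1
  by_contra hcon
  push_neg at hcon
  have hprod : 0 < (k : ℝ) * (‖pstar - μ‖ - 5 * γ * R) :=
    mul_pos hk0 (by linarith)
  have h1 : (4 / 7 : ℝ) * k * (‖pstar - μ‖ - γ * R) ≤
      ((T ∩ G).card : ℝ) * (‖pstar - μ‖ - γ * R) :=
    mul_le_mul_of_nonneg_right hmge (by linarith)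
  nlinarith [mul_pos hk0 (mul_pos hγ hR)]
end

section
/- Fix a sample size s ≥ 2 and ε ∈ (0,1) with s²ε ≥ 2. Consider the distribution on ℝ that puts mass 1/(2s²ε) at each of -s√ε and s√ε, and mass 1 - 1/(s²ε) at 0. Then this distribution has mean 0 and variance 1, and the probability that the empirical mean μ̂ of s i.i.d. samples satisfies |μ̂| ≥ √ε is at least (1/(sε))·(1 - 1/(sε)). -/
/-!
The event `|μ̂| ≥ √ε` contains every outcome in which exactly one sample is `±s√ε` and all
others are `0`. These `2s` outcomes each have probability `(1/(2s²ε))·(1 - 1/(s²ε))^(s-1)`, and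
Bernoulli's inequality bounds `(1 - 1/(s²ε))^(s-1)` below by `1 - 1/(sε)`.
-/

open Finset Function

section SingleDeviation

variable {ι α : Type*} [Fintype ι] [DecidableEq ι]

theorem prod_comp_update_const {M : Type*} [CommMonoid M] (q : α → M) (a : α) (k : ι) (b : α) :
    ∏ i, q (update (fun _ => a) k b i) = q b * q a ^ (Fintype.card ι - 1) := by
  rw [← comp_def q, comp_update, prod_update_of_mem (mem_univ k)]
  simp [card_sdiff_of_subset]

theorem sum_comp_update_const_of_eq_zero {M : Type*} [AddCommMonoid M] (v : α → M) {a : α}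
    (ha : v a = 0) (k : ι) (b : α) :
    ∑ i, v (update (fun _ => a) k b i) = v b := by
  rw [← comp_def v, comp_update, sum_update_of_mem (mem_univ k)]
  simp [ha]

theorem update_const_injOn {a : α} {B : Finset α} (haB : a ∉ B) :
    Set.InjOn (fun p : ι × α => update (fun _ => a) p.1 p.2) (univ ×ˢ B : Finset (ι × α)) := by
  rintro ⟨k, b⟩ hb ⟨k', b'⟩ hb' h
  simp only [coe_product, coe_univ, Set.mem_prod, Set.mem_univ, mem_coe, true_and] at hb hb'
  have hk : k = k' := by
    by_contra hne
    have := congrFun h k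
    simp only [update_self, update_of_ne hne] at this
    exact haB (this ▸ hb)
  subst hk
  simpa using congrFun h k

variable [Fintype α] [DecidableEq α]

theorem card_mul_sum_mul_pow_le_sum_prod_ite (q : α → ℝ) (hq : ∀ x, 0 ≤ q x)
    (E : (ι → α) → Prop) [DecidablePred E] {a : α} {B : Finset α} (haB : a ∉ B)
    (hE : ∀ k, ∀ b ∈ B, E (update (fun _ => a) k b)) :
    Fintype.card ι * (∑ b ∈ B, q b) * q a ^ (Fintype.card ι - 1) ≤
      ∑ f : ι → α, (∏ i, q (f i)) * if E f then 1 else 0 := by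
  calc Fintype.card ι * (∑ b ∈ B, q b) * q a ^ (Fintype.card ι - 1)
      = ∑ p ∈ (univ : Finset ι) ×ˢ B, ∏ i, q (update (fun _ => a) p.1 p.2 i) := by
        rw [sum_product]
        simp only [prod_comp_update_const]
        rw [← sum_mul, sum_const, card_univ, nsmul_eq_mul, mul_assoc]
    _ = ∑ f ∈ ((univ : Finset ι) ×ˢ B).image (fun p : ι × α => update (fun _ => a) p.1 p.2),
          (∏ i, q (f i)) * if E f then 1 else 0 := by
        rw [sum_image (update_const_injOn haB)]
        refine sum_congr rfl fun p hp => ?_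
        rw [if_pos (hE p.1 p.2 (mem_product.1 hp).2), mul_one]
    _ ≤ ∑ f : ι → α, (∏ i, q (f i)) * if E f then 1 else 0 :=
        sum_le_sum_of_subset_of_nonneg (subset_univ _) fun f _ _ =>
          mul_nonneg (prod_nonneg fun i _ => hq _) (by positivity)

end SingleDeviation

theorem one_sub_mul_le_one_sub_pow_pred {x : ℝ} (hx0 : 0 ≤ x) (hx2 : x ≤ 2) :
    ∀ n : ℕ, 1 - n * x ≤ (1 - x) ^ (n - 1)
  | 0 => by simp
  | n + 1 => by
    have bernoulli := one_add_mul_le_pow (a := -x) (by linarith) n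
    simp only [Nat.add_sub_cancel, Nat.cast_add, Nat.cast_one, ← sub_eq_add_neg] at bernoulli ⊢
    nlinarith

theorem empirical_mean_bad_general (s : ℕ) (hs : 2 ≤ s) (ε : ℝ)
    (hε0 : 0 < ε) (hsε : 2 ≤ (s : ℝ) ^ 2 * ε)
    (q v : Fin 3 → ℝ)
    (hq : q = ![1 / (2 * (s : ℝ) ^ 2 * ε), 1 - 1 / ((s : ℝ) ^ 2 * ε),
                1 / (2 * (s : ℝ) ^ 2 * ε)])
    (hv : v = ![-(s * Real.sqrt ε), 0, s * Real.sqrt ε]) :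
    (∑ j, q j * v j = 0) ∧
    (∑ j, q j * v j ^ 2 = 1) ∧
    (1 / ((s : ℝ) * ε)) * (1 - 1 / ((s : ℝ) * ε)) ≤
      ∑ f : Fin s → Fin 3, (∏ i, q (f i)) *
        (if Real.sqrt ε ≤ |(s : ℝ)⁻¹ * ∑ i, v (f i)| then 1 else 0) := by
  have hs0 : (0 : ℝ) < s := Nat.cast_pos.2 (by omega)
  have hx : 1 / ((s : ℝ) ^ 2 * ε) ≤ 1 / 2 := one_div_le_one_div_of_le two_pos hsε
  have hq1 : q 1 = 1 - 1 / ((s : ℝ) ^ 2 * ε) := by simp [hq]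
  have hv1 : v 1 = 0 := by simp [hv]
  have hq02 : q 0 + q 2 = 1 / ((s : ℝ) ^ 2 * ε) := by
    simp [hq]
    ring
  refine ⟨by simp [hq, hv, Fin.sum_univ_three], ?_, ?_⟩
  · simp [hq, hv, Fin.sum_univ_three, mul_pow, Real.sq_sqrt hε0.le]
    field_simp
    ring
  have hq_nonneg : ∀ j, 0 ≤ q j := by
    have hc : (0 : ℝ) ≤ 1 / (2 * (s : ℝ) ^ 2 * ε) := by positivity
    subst hq
    intro j
    fin_cases j
    exacts [hc, sub_nonneg.2 (hx.trans (by norm_num)), hc]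
  have hE : ∀ k : Fin s, ∀ b ∈ ({0, 2} : Finset (Fin 3)),
      √ε ≤ |(s : ℝ)⁻¹ * ∑ i, v (update (fun _ => (1 : Fin 3)) k b i)| := by
    intro k b hb
    have hvb : |v b| = s * √ε := by
      rcases mem_insert.1 hb with rfl | hb
      · simp [hv, abs_of_pos hs0]
      · simp [mem_singleton.1 hb, hv, abs_of_pos hs0]
    rw [sum_comp_update_const_of_eq_zero v hv1, abs_mul, hvb, abs_inv, abs_of_pos hs0,
      inv_mul_cancel_left₀ hs0.ne']
  have hsx : (s : ℝ) * (1 / ((s : ℝ) ^ 2 * ε)) = 1 / (s * ε) := by field_simp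
  calc 1 / ((s : ℝ) * ε) * (1 - 1 / ((s : ℝ) * ε))
      ≤ 1 / ((s : ℝ) * ε) * q 1 ^ (s - 1) := by
        rw [hq1, ← hsx]
        gcongr
        exact one_sub_mul_le_one_sub_pow_pred (by positivity) (by linarith) s
    _ = Fintype.card (Fin s) * (∑ b ∈ {0, 2}, q b) * q 1 ^ (Fintype.card (Fin s) - 1) := by
        rw [Fintype.card_fin, sum_pair (by decide), hq02, ← hsx]
    _ ≤ _ := card_mul_sum_mul_pow_le_sum_prod_ite q hq_nonneg _ (by decide) hE

/-- The hard distribution for the empirical mean: mass `1/(2s²ε)` at each of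
`-s√ε` and `s√ε`, mass `1 - 1/(s²ε)` at `0`. It has mean `0`, variance `1`,
and the probability (over `s` i.i.d. samples, modeled as the weighted sum over
all outcome tuples) that the empirical mean has absolute value at least `√ε`
is at least `(1/(sε))·(1 - 1/(sε))`. -/
theorem empirical_mean_bad (s : ℕ) (hs : 2 ≤ s) (ε : ℝ)
    (hε0 : 0 < ε) (hε1 : ε < 1) (hsε : 2 ≤ (s : ℝ) ^ 2 * ε)
    (q v : Fin 3 → ℝ)
    (hq : q = ![1 / (2 * (s : ℝ) ^ 2 * ε), 1 - 1 / ((s : ℝ) ^ 2 * ε),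
                1 / (2 * (s : ℝ) ^ 2 * ε)])
    (hv : v = ![-(s * Real.sqrt ε), 0, s * Real.sqrt ε]) :
    (∑ j, q j * v j = 0) ∧
    (∑ j, q j * v j ^ 2 = 1) ∧
    (1 / ((s : ℝ) * ε)) * (1 - 1 / ((s : ℝ) * ε)) ≤
      ∑ f : Fin s → Fin 3, (∏ i, q (f i)) *
        (if Real.sqrt ε ≤ |(s : ℝ)⁻¹ * ∑ i, v (f i)| then 1 else 0) :=
  empirical_mean_bad_general s hs ε hε0 hsε q v hq hv
end
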